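/- arXiv:2508.01063 — 2 statements merged into one kernel-verified Lean document; each statement's English description precedes it below -/
import Mathlib

section
/- Let V be a finite vertex set, E ⊆ V × V a set of edges, N, k ∈ ℕ with k ≥ 2, and ε > 0. Suppose Φ assigns to each vertex i ∈ V a real N×k matrix with orthonormal columns, and Ω assigns to each edge (i,j) ∈ E an orthogonal k×k real matrix such that the Frobenius norm ‖Φᵢ · Ω_{ij} − Φⱼ‖_F < ε. Suppose γ : V → ℤ/2ℤ satisfies det(Ω_{ij}) = (−1)^(γᵢ + γⱼ) for every edge (i,j) ∈ E. Define Θᵢ to be the k×k identity if γᵢ = 0 and the parity-flip matrix P if γᵢ = 1. Then for every edge (i,j) ∈ E, the matrix Ω'_{ij} := Θᵢ · Ω_{ij} · Θⱼᵀ is orthogonal with det(Ω'_{ij}) = 1, and ‖(Φᵢ · Θᵢᵀ) · Ω'_{ij} − Φⱼ · Θⱼᵀ‖_F < ε. That is, the orientation-flipping construction turns an ε-approximate local trivialisation into an ε-approximate local trivialisation with orientation-preserving transition matrices, with no loss in the error bound. -/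
open Matrix

/-- The Frobenius norm of a real matrix. -/
noncomputable def frobNorm {m n : ℕ} (M : Matrix (Fin m) (Fin n) ℝ) : ℝ :=
  Real.sqrt (∑ i, ∑ j, (M i j) ^ 2)

lemma permMatrix_transpose {n : Type*} [DecidableEq n] (σ : Equiv.Perm n)
    (hσ : ∀ x, σ (σ x) = x) : (σ.permMatrix ℝ)ᵀ = σ.permMatrix ℝ := by
  ext i j
  simp only [transpose_apply, PEquiv.toMatrix_apply, Equiv.toPEquiv_apply, Option.mem_def,
    Option.some.injEq]
  by_cases h : σ i = j
  · rw [if_pos h, if_pos (by rw [← h, hσ])]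
  · rw [if_neg h, if_neg (fun h2 => h (by rw [← h2, hσ]))]

lemma permMatrix_mul_self {n : Type*} [DecidableEq n] [Fintype n] (σ : Equiv.Perm n)
    (hσ : ∀ x, σ (σ x) = x) : σ.permMatrix ℝ * σ.permMatrix ℝ = 1 := by
  rw [show σ.permMatrix ℝ * σ.permMatrix ℝ = σ.toPEquiv.toMatrix * σ.permMatrix ℝ from rfl,
    PEquiv.toMatrix_toPEquiv_mul]
  ext i j
  simp [Equiv.toPEquiv_apply, Matrix.one_apply, hσ]

lemma trace_eq_sum_sq {m n : ℕ} (M : Matrix (Fin m) (Fin n) ℝ) :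
    Matrix.trace (M * Mᵀ) = ∑ i, ∑ j, (M i j) ^ 2 := by
  simp [Matrix.trace, Matrix.mul_apply, sq, Matrix.diag]

lemma frob_mul_orth {m n : ℕ} (M : Matrix (Fin m) (Fin n) ℝ) (Q : Matrix (Fin n) (Fin n) ℝ)
    (hQ : Q * Qᵀ = 1) : frobNorm (M * Q) = frobNorm M := by
  unfold frobNorm
  rw [← trace_eq_sum_sq, ← trace_eq_sum_sq, Matrix.transpose_mul, ← Matrix.mul_assoc,
    Matrix.mul_assoc M Q, hQ, Matrix.mul_one]

/-- Orienting an ε-approximate discrete vector bundle: flipping the frame orientation at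
vertices where `γ = 1` yields orientation-preserving transition matrices with no loss in the
approximation error. -/
theorem orient_approx_discrete_bundle
    {V : Type*} [Fintype V] (E : Set (V × V)) (N k : ℕ) (hk : 2 ≤ k) (ε : ℝ) (hε : 0 < ε)
    (Φ : V → Matrix (Fin N) (Fin k) ℝ)
    (hΦ : ∀ i : V, (Φ i)ᵀ * Φ i = 1)
    (Ω : V × V → Matrix (Fin k) (Fin k) ℝ)
    (hΩorth : ∀ e ∈ E, (Ω e)ᵀ * Ω e = 1)
    (hΩ : ∀ e ∈ E, frobNorm (Φ e.1 * Ω e - Φ e.2) < ε)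
    (γ : V → ZMod 2)
    (hγ : ∀ e ∈ E, (Ω e).det = (-1 : ℝ) ^ (γ e.1 + γ e.2).val)
    (P : Matrix (Fin k) (Fin k) ℝ)
    (hP : P = (Equiv.swap (⟨0, by omega⟩ : Fin k) (⟨1, by omega⟩ : Fin k)).permMatrix ℝ)
    (Θ : V → Matrix (Fin k) (Fin k) ℝ)
    (hΘ : ∀ i : V, Θ i = if γ i = 0 then 1 else P) :
    ∀ e ∈ E,
      ((Θ e.1 * Ω e * (Θ e.2)ᵀ)ᵀ * (Θ e.1 * Ω e * (Θ e.2)ᵀ) = 1 ∧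
        (Θ e.1 * Ω e * (Θ e.2)ᵀ).det = 1) ∧
      frobNorm ((Φ e.1 * (Θ e.1)ᵀ) * (Θ e.1 * Ω e * (Θ e.2)ᵀ) - Φ e.2 * (Θ e.2)ᵀ) < ε := by
  have hPsymm : Pᵀ = P := by
    rw [hP]; exact permMatrix_transpose _ (fun x => Equiv.swap_apply_self _ _ x)
  have hPP : P * P = 1 := by
    rw [hP]; exact permMatrix_mul_self _ (fun x => Equiv.swap_apply_self _ _ x)
  have hne : (⟨0, by omega⟩ : Fin k) ≠ (⟨1, by omega⟩ : Fin k) := by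
    intro h; simpa using congrArg Fin.val h
  have hdetP : P.det = -1 := by
    rw [hP, Matrix.det_permutation, Equiv.Perm.sign_swap hne]; simp
  have h2 : ∀ x : ZMod 2, x = 0 ∨ x = 1 := by decide
  have hΘsymm : ∀ i, (Θ i)ᵀ = Θ i := by
    intro i; rw [hΘ i]; split_ifs
    · simp
    · exact hPsymm
  have hΘΘ : ∀ i, Θ i * Θ i = 1 := by
    intro i; rw [hΘ i]; split_ifs
    · simp
    · exact hPP
  have hΘdet : ∀ i, (Θ i).det = (-1 : ℝ) ^ (γ i).val := by
    intro i; rw [hΘ i]; rcases h2 (γ i) with h | h <;> rw [h] <;> simp [hdetP, ZMod.val_one]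
  intro e he
  refine ⟨⟨?_, ?_⟩, ?_⟩
  · simp only [Matrix.transpose_mul, hΘsymm, Matrix.transpose_transpose, Matrix.mul_assoc]
    rw [← Matrix.mul_assoc (Θ e.1) (Θ e.1), hΘΘ, Matrix.one_mul,
      ← Matrix.mul_assoc (Ω e)ᵀ (Ω e), hΩorth e he, Matrix.one_mul, hΘΘ]
  · rw [Matrix.det_mul, Matrix.det_mul, Matrix.det_transpose, hγ e he, hΘdet, hΘdet]
    rcases h2 (γ e.1) with h1 | h1 <;> rcases h2 (γ e.2) with h3 | h3 <;>
      rw [h1, h3] <;>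
      norm_num [show (ZMod.val (1 : ZMod 2)) = 1 from rfl,
        show (ZMod.val (2 : ZMod 2)) = 0 from rfl,
        show ((1 : ZMod 2) + 1) = 2 from rfl]
  · have key : (Φ e.1 * (Θ e.1)ᵀ) * (Θ e.1 * Ω e * (Θ e.2)ᵀ) - Φ e.2 * (Θ e.2)ᵀ
        = (Φ e.1 * Ω e - Φ e.2) * (Θ e.2)ᵀ := by
      simp only [hΘsymm, Matrix.sub_mul, Matrix.mul_assoc]
      rw [← Matrix.mul_assoc (Θ e.1) (Θ e.1), hΘΘ, Matrix.one_mul]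
    rw [key, frob_mul_orth _ _ (by rw [Matrix.transpose_transpose, hΘsymm, hΘΘ])]
    exact hΩ e he
end

section
/- Let n ≥ 1 be a natural number, k_y ∈ ℝ, and ω = √(k_y² + 2n), so that ω > |k_y|. Let f_n denote the n-th Hermite function. Define φ₁(x) = √(2n/(ω − k_y)) · f_n(x) and φ₂(x) = −i · √(ω − k_y) · f_{n−1}(x). Then for all x ∈ ℝ: k_y·φ₁(x) + i·(x·φ₂(x) − φ₂'(x)) = ω·φ₁(x), and −i·(x·φ₁(x) + φ₁'(x)) − k_y·φ₂(x) = ω·φ₂(x); that is, (φ₁, φ₂) is an eigenfunction of the rotated 2D Dirac operator with eigenvalue ω_n = √(k_y² + 2n). Moreover, the pair ψ₁(x) = √(2n/(ω + k_y)) · f_n(x), ψ₂(x) = i · √(ω + k_y) · f_{n−1}(x) satisfies the same two equations with ω replaced by −ω on the right-hand sides; that is, it is an eigenfunction with eigenvalue −ω_n. -/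
open Real Polynomial Complex

/-- The `n`-th Hermite function `f_n(x) = (2ⁿ n! √π)^{-1/2} e^{-x²/2} H_n(x)`, where
`H_n(x) = 2^{n/2} He_n(x√2)` and `He_n` is the probabilists' Hermite polynomial. -/
noncomputable def hermiteFun (n : ℕ) (x : ℝ) : ℝ :=
  (Real.sqrt (2 ^ n * n.factorial * Real.sqrt Real.pi))⁻¹ * Real.exp (-x ^ 2 / 2) *
    ((2 : ℝ) ^ ((n : ℝ) / 2) * Polynomial.aeval (x * Real.sqrt 2) (Polynomial.hermite n))

section Aux

lemma derivHermite (n : ℕ) : derivative (hermite (n+1)) = (n+1 : ℕ) • hermite n := by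
  induction n with
  | zero => simp [hermite_succ, hermite_zero]
  | succ n ih =>
    rw [hermite_succ (n+1), derivative_sub, derivative_mul, derivative_X, one_mul, ih]
    simp only [derivative_smul, smul_sub, hermite_succ n]
    ring_nf

lemma aevalDeriv (p : Polynomial ℤ) (x : ℝ) :
    HasDerivAt (fun x : ℝ => (aeval (x * Real.sqrt 2) p : ℝ))
      (Real.sqrt 2 * aeval (x * Real.sqrt 2) (derivative p)) x := by
  have h := (Polynomial.hasDerivAt (p.map (Int.castRingHom ℝ)) (x * Real.sqrt 2)).comp x
    ((hasDerivAt_id x).mul_const (Real.sqrt 2))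
  simp only [Function.comp_def, aeval_def, eval₂_eq_eval_map, derivative_map, id_eq, one_mul] at h ⊢
  rw [algebraMap_int_eq]
  exact h.congr_deriv (by ring)

lemma hermiteFun_hasDerivAt (n : ℕ) (x : ℝ) :
    HasDerivAt (hermiteFun n)
      (-x * hermiteFun n x +
        (Real.sqrt (2 ^ n * n.factorial * Real.sqrt Real.pi))⁻¹ * Real.exp (-x ^ 2 / 2) *
          ((2 : ℝ) ^ ((n : ℝ) / 2) *
            (Real.sqrt 2 * aeval (x * Real.sqrt 2) (derivative (hermite n))))) x := by
  have hexp : HasDerivAt (fun x : ℝ => Real.exp (-x ^ 2 / 2)) (-x * Real.exp (-x ^ 2 / 2)) x := by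
    have h : HasDerivAt (fun x : ℝ => -x ^ 2 / 2) (-x) x := by
      have := ((hasDerivAt_pow 2 x).neg).div_const 2
      exact this.congr_deriv (by push_cast; ring)
    simpa [mul_comm] using h.exp
  have h := ((hexp.const_mul ((Real.sqrt (2 ^ n * n.factorial * Real.sqrt Real.pi))⁻¹)).mul
    ((aevalDeriv (hermite n) x).const_mul ((2:ℝ) ^ ((n:ℝ)/2))))
  refine h.congr_deriv ?_
  simp only [hermiteFun]
  ring

noncomputable def Cc (n : ℕ) : ℝ := (Real.sqrt (2 ^ n * n.factorial * Real.sqrt Real.pi))⁻¹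
noncomputable def Kk (n : ℕ) : ℝ := (2 : ℝ) ^ ((n : ℝ) / 2)

lemma cpos (n : ℕ) : 0 < Real.sqrt (2 ^ n * n.factorial * Real.sqrt Real.pi) := by
  apply Real.sqrt_pos.mpr
  positivity

lemma hK (n : ℕ) : Kk (n+1) = Kk n * Real.sqrt 2 := by
  rw [Kk, Kk, Real.sqrt_eq_rpow, ← Real.rpow_add two_pos]
  push_cast; ring_nf

lemma hC (n : ℕ) : Real.sqrt (2 ^ (n+1) * (n+1).factorial * Real.sqrt Real.pi)
    = Real.sqrt (2*(n+1)) * Real.sqrt (2 ^ n * n.factorial * Real.sqrt Real.pi) := by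
  rw [← Real.sqrt_mul (by positivity)]
  congr 1
  push_cast [Nat.factorial_succ]
  ring

lemma Spos (n : ℕ) : (0:ℝ) < Real.sqrt (2*(n+1)) := Real.sqrt_pos.mpr (by positivity)

lemma constId (n : ℕ) : Real.sqrt (2*(n+1)) * (Cc (n+1) * Kk (n+1)) = Cc n * Kk n * Real.sqrt 2 := by
  rw [Cc, Cc, hK, hC]
  have h1 := (cpos n).ne'
  have h2 := (Spos n).ne'
  field_simp

lemma constId2 (n : ℕ) : ((n:ℝ)+1) * Real.sqrt 2 * (Cc (n+1) * Kk (n+1))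
    = Real.sqrt (2*(n+1)) * (Cc n * Kk n) := by
  rw [Cc, Cc, hK, hC]
  have h1 := (cpos n).ne'
  have h2 := (Spos n).ne'
  have h3 : Real.sqrt 2 * Real.sqrt 2 = 2 := Real.mul_self_sqrt (by norm_num)
  have h4 : Real.sqrt (2*(n+1)) * Real.sqrt (2*(n+1)) = 2*((n:ℝ)+1) := by
    rw [Real.mul_self_sqrt (by positivity)]
  generalize Real.sqrt (2 ^ n * n.factorial * Real.sqrt Real.pi) = c at h1 ⊢
  generalize hS : Real.sqrt (2*((n:ℕ)+1):ℝ) = S at h2 h4 ⊢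
  generalize Real.sqrt 2 = s at h3 ⊢
  field_simp
  linear_combination (((n:ℝ)+1)*Kk n) * h3 - (Kk n) * h4

lemma hermiteFun_eq (n : ℕ) (x : ℝ) :
    hermiteFun n x = Cc n * Real.exp (-x ^ 2 / 2) *
      (Kk n * aeval (x * Real.sqrt 2) (hermite n)) := rfl

lemma ladder_down (n : ℕ) (x : ℝ) :
    x * hermiteFun (n+1) x + deriv (hermiteFun (n+1)) x
      = Real.sqrt (2*(n+1)) * hermiteFun n x := by
  rw [(hermiteFun_hasDerivAt (n+1) x).deriv]
  have hd : (aeval (x * Real.sqrt 2) (derivative (hermite (n+1))) : ℝ)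
      = ((n:ℝ)+1) * aeval (x * Real.sqrt 2) (hermite n) := by
    rw [derivHermite, map_nsmul, nsmul_eq_mul]; push_cast; ring
  rw [hd, hermiteFun_eq, hermiteFun_eq]
  have h2 := constId2 n
  rw [show ((Real.sqrt (2 ^ (n+1) * (n+1).factorial * Real.sqrt Real.pi))⁻¹ : ℝ) = Cc (n+1) from rfl,
      show ((2:ℝ) ^ (((n+1:ℕ) : ℝ) / 2)) = Kk (n+1) from rfl]
  linear_combination (Real.exp (-x ^ 2 / 2) * (aeval (x * Real.sqrt 2) (hermite n) : ℝ)) * h2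

lemma ladder_up (n : ℕ) (x : ℝ) :
    x * hermiteFun n x - deriv (hermiteFun n) x
      = Real.sqrt (2*(n+1)) * hermiteFun (n+1) x := by
  rw [(hermiteFun_hasDerivAt n x).deriv]
  have hs : (aeval (x * Real.sqrt 2) (hermite (n+1)) : ℝ)
      = (x * Real.sqrt 2) * aeval (x * Real.sqrt 2) (hermite n)
        - aeval (x * Real.sqrt 2) (derivative (hermite n)) := by
    rw [hermite_succ]; simp
  rw [hermiteFun_eq, hermiteFun_eq, hs]
  have h1 := constId n
  have h3 : Real.sqrt 2 * Real.sqrt 2 = 2 := Real.mul_self_sqrt (by norm_num)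
  rw [show ((Real.sqrt (2 ^ n * n.factorial * Real.sqrt Real.pi))⁻¹ : ℝ) = Cc n from rfl,
      show ((2:ℝ) ^ ((n : ℝ) / 2)) = Kk n from rfl]
  linear_combination (Real.exp (-x ^ 2 / 2) * ((aeval (x * Real.sqrt 2) (derivative (hermite n)) : ℝ) - Real.sqrt 2 * x * (aeval (x * Real.sqrt 2) (hermite n) : ℝ))) * h1 - (Cc n * Kk n * Real.exp (-x ^ 2 / 2) * x * (aeval (x * Real.sqrt 2) (hermite n) : ℝ)) * h3

lemma sqrt_aux1 (s a : ℝ) (hs : 0 ≤ s) (ha : 0 < a) :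
    Real.sqrt s * Real.sqrt a = a * Real.sqrt (s / a) := by
  have hroot : Real.sqrt a * Real.sqrt a = a := Real.mul_self_sqrt ha.le
  have han : Real.sqrt a ≠ 0 := (Real.sqrt_pos.mpr ha).ne'
  rw [Real.sqrt_div hs]
  field_simp
  linear_combination (Real.sqrt s) * hroot

lemma sqrt_aux2 (a b : ℝ) (ha : 0 < a) (hb : 0 ≤ b) :
    Real.sqrt (a * b) * Real.sqrt ((a * b) / a) = b * Real.sqrt a := by
  rw [mul_div_cancel_left₀ b ha.ne', Real.sqrt_mul ha.le, mul_assoc,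
    Real.mul_self_sqrt hb]
  ring

lemma derivHelpZ (z : ℂ) (c : ℝ) (k : ℕ) (x : ℝ) :
    deriv (fun y : ℝ => z * ((c * hermiteFun k y : ℝ) : ℂ)) x
      = z * ((c * deriv (hermiteFun k) x : ℝ) : ℂ) := by
  have h := hermiteFun_hasDerivAt k x
  have h2 := ((h.const_mul c).ofReal_comp.const_mul z).deriv
  rw [← h.deriv] at h2
  exact h2

lemma derivHelp1 (c : ℝ) (k : ℕ) (x : ℝ) :
    deriv (fun y : ℝ => ((c * hermiteFun k y : ℝ) : ℂ)) x
      = ((c * deriv (hermiteFun k) x : ℝ) : ℂ) := by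
  have h := hermiteFun_hasDerivAt k x
  have h2 := ((h.const_mul c).ofReal_comp).deriv
  rw [← h.deriv] at h2
  exact h2

end Aux

/-- The band modes of the rotated 2D Dirac operator: for `n ≥ 1` and `ω = √(k_y² + 2n)`,
`(φ₁, φ₂)` is an eigenfunction with eigenvalue `ω`, and `(ψ₁, ψ₂)` is an eigenfunction with
eigenvalue `−ω`. -/
theorem dirac_band_modes
    (n : ℕ) (hn : 1 ≤ n) (k_y ω : ℝ) (hω : ω = Real.sqrt (k_y ^ 2 + 2 * n))
    (φ₁ φ₂ ψ₁ ψ₂ : ℝ → ℂ)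
    (hφ₁ : ∀ x : ℝ, φ₁ x = ((Real.sqrt (2 * n / (ω - k_y)) * hermiteFun n x : ℝ) : ℂ))
    (hφ₂ : ∀ x : ℝ, φ₂ x = -Complex.I * ((Real.sqrt (ω - k_y) * hermiteFun (n - 1) x : ℝ) : ℂ))
    (hψ₁ : ∀ x : ℝ, ψ₁ x = ((Real.sqrt (2 * n / (ω + k_y)) * hermiteFun n x : ℝ) : ℂ))
    (hψ₂ : ∀ x : ℝ, ψ₂ x = Complex.I * ((Real.sqrt (ω + k_y) * hermiteFun (n - 1) x : ℝ) : ℂ)) :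
    (∀ x : ℝ,
      (k_y : ℂ) * φ₁ x + Complex.I * ((x : ℂ) * φ₂ x - deriv φ₂ x) = (ω : ℂ) * φ₁ x ∧
      -Complex.I * ((x : ℂ) * φ₁ x + deriv φ₁ x) - (k_y : ℂ) * φ₂ x = (ω : ℂ) * φ₂ x) ∧
    (∀ x : ℝ,
      (k_y : ℂ) * ψ₁ x + Complex.I * ((x : ℂ) * ψ₂ x - deriv ψ₂ x) = -(ω : ℂ) * ψ₁ x ∧
      -Complex.I * ((x : ℂ) * ψ₁ x + deriv ψ₁ x) - (k_y : ℂ) * ψ₂ x = -(ω : ℂ) * ψ₂ x) := by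
  obtain ⟨m, rfl⟩ : ∃ m, n = m + 1 := ⟨n - 1, (Nat.succ_pred_eq_of_pos hn).symm⟩
  simp only [Nat.add_sub_cancel] at hφ₂ hψ₂
  have hφ₁' : φ₁ = _ := funext hφ₁
  have hφ₂' : φ₂ = _ := funext hφ₂
  have hψ₁' : ψ₁ = _ := funext hψ₁
  have hψ₂' : ψ₂ = _ := funext hψ₂
  subst hφ₁' hφ₂' hψ₁' hψ₂'
  -- real scalar facts
  have hω0 : 0 ≤ ω := hω ▸ Real.sqrt_nonneg _
  have hm1 : (1:ℝ) ≤ (m:ℝ) + 1 := by have := Nat.cast_nonneg (α := ℝ) m; linarith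
  have hω2 : ω ^ 2 = k_y ^ 2 + 2 * ((m:ℝ) + 1) := by
    rw [hω, Real.sq_sqrt (by positivity)]; push_cast; ring
  have ha : 0 < ω - k_y := by nlinarith
  have hb : 0 < ω + k_y := by nlinarith
  have hs : (0:ℝ) ≤ 2 * ((m:ℝ) + 1) := by positivity
  have hab : (ω - k_y) * (ω + k_y) = 2 * ((m:ℝ) + 1) := by nlinarith
  have hba : (ω + k_y) * (ω - k_y) = 2 * ((m:ℝ) + 1) := by nlinarith
  have S1 := sqrt_aux1 (2 * ((m:ℝ) + 1)) (ω - k_y) hs ha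
  have S2 : Real.sqrt (2 * ((m:ℝ) + 1)) * Real.sqrt (2 * ((m:ℝ) + 1) / (ω - k_y))
      = (ω + k_y) * Real.sqrt (ω - k_y) := by
    rw [show (2 * ((m:ℝ) + 1)) = (ω - k_y) * (ω + k_y) from hab.symm]
    exact sqrt_aux2 _ _ ha hb.le
  have S3 := sqrt_aux1 (2 * ((m:ℝ) + 1)) (ω + k_y) hs hb
  have S4 : Real.sqrt (2 * ((m:ℝ) + 1)) * Real.sqrt (2 * ((m:ℝ) + 1) / (ω + k_y))
      = (ω - k_y) * Real.sqrt (ω + k_y) := by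
    rw [show (2 * ((m:ℝ) + 1)) = (ω + k_y) * (ω - k_y) from hba.symm]
    exact sqrt_aux2 _ _ hb ha.le
  have S1C := congrArg (Complex.ofReal) S1; push_cast at S1C
  have S2C := congrArg (Complex.ofReal) S2; push_cast at S2C
  have S3C := congrArg (Complex.ofReal) S3; push_cast at S3C
  have S4C := congrArg (Complex.ofReal) S4; push_cast at S4C
  have hII : Complex.I * Complex.I = -1 := Complex.I_mul_I
  constructor <;> intro x <;>
    have RupC := congrArg (Complex.ofReal) (ladder_up m x) <;>
    have RdnC := congrArg (Complex.ofReal) (ladder_down m x) <;>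
    push_cast at RupC RdnC <;>
    rw [derivHelpZ, derivHelp1] <;>
    push_cast <;>
    constructor
  · linear_combination (-Complex.I * Complex.I * (Real.sqrt (ω - k_y) : ℂ)) * RupC +
      (-Complex.I * Complex.I * ((hermiteFun (m+1) x : ℝ) : ℂ)) * S1C +
      (-((ω:ℂ) - (k_y:ℂ)) * (Real.sqrt (2*((m:ℝ)+1)/(ω - k_y)) : ℂ) * ((hermiteFun (m+1) x : ℝ) : ℂ)) * hII
  · linear_combination (-Complex.I * (Real.sqrt (2*((m:ℝ)+1)/(ω - k_y)) : ℂ)) * RdnC +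
      (-Complex.I * ((hermiteFun m x : ℝ) : ℂ)) * S2C
  · linear_combination (Complex.I * Complex.I * (Real.sqrt (ω + k_y) : ℂ)) * RupC +
      (Complex.I * Complex.I * ((hermiteFun (m+1) x : ℝ) : ℂ)) * S3C +
      (((ω:ℂ) + (k_y:ℂ)) * (Real.sqrt (2*((m:ℝ)+1)/(ω + k_y)) : ℂ) * ((hermiteFun (m+1) x : ℝ) : ℂ)) * hII
  · linear_combination (-Complex.I * (Real.sqrt (2*((m:ℝ)+1)/(ω + k_y)) : ℂ)) * RdnC +
      (-Complex.I * ((hermiteFun m x : ℝ) : ℂ)) * S4C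
end
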